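/- Failure of duality without no-arbitrage: let T = d = 1, Ω = ℝ, S₀ = 0, S₁(ω) = ω, and 𝒫 the convex hull of { δ_x : x ∈ [0,1] }. Then NA(𝒫) fails; for X = −1_{{0}}, the primal value inf_{h∈ℝ} sup_{P∈𝒫} log E_P[exp(X + h·ΔS)] equals 0, whereas the dual value sup_{Q∈ℳ}( E_Q[X] − H(Q,𝒫) ) equals X(0) = −1, since the only martingale measure with finite robust entropy is ℳ = {δ₀}. Hence the duality gap is strictly positive. -/

import Mathlib

open MeasureTheory ENNReal NNReal Real Filter Classical

noncomputable section

variable {Ω : Type*} [MeasurableSpace Ω]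

/-- Relative entropy `H(Q,P) ∈ [0,∞]`, `+∞` if `Q` is not absolutely continuous w.r.t. `P`. -/
def relEntropy (Q P : Measure Ω) : ℝ≥0∞ :=
  if Q ≪ P then
    (∫⁻ ω, ENNReal.ofReal ((Q.rnDeriv P ω).toReal * Real.log (Q.rnDeriv P ω).toReal + 1) ∂P) - 1
  else ⊤

/-- Robust relative entropy `H(Q,Pfam) = inf_{P ∈ Pfam} H(Q,P)`. -/
def robustEntropy (Q : Measure Ω) (Pfam : Set (Measure Ω)) : ℝ≥0∞ :=
  ⨅ P ∈ Pfam, relEntropy Q P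

/-- Positive part of an extended real, valued in `ℝ≥0∞`. -/
def ePos (x : EReal) : ℝ≥0∞ := if x = ⊤ then ⊤ else ENNReal.ofReal x.toReal

/-- Expectation `E_Q[X] = E_Q[X⁺] − E_Q[X⁻]` with value `−∞` when `E_Q[X⁻] = +∞`. -/
def eInt (Q : Measure Ω) (X : Ω → ℝ) : EReal :=
  if (∫⁻ ω, ENNReal.ofReal (-(X ω)) ∂Q) = ⊤ then ⊥
  else ((∫⁻ ω, ENNReal.ofReal (X ω) ∂Q : ℝ≥0∞) : EReal)
       - ((∫⁻ ω, ENNReal.ofReal (-(X ω)) ∂Q : ℝ≥0∞) : EReal)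

/-- Expectation of an `EReal`-valued function, same convention. -/
def eIntE (Q : Measure Ω) (X : Ω → EReal) : EReal :=
  if (∫⁻ ω, ePos (-(X ω)) ∂Q) = ⊤ then ⊥
  else ((∫⁻ ω, ePos (X ω) ∂Q : ℝ≥0∞) : EReal) - ((∫⁻ ω, ePos (-(X ω)) ∂Q : ℝ≥0∞) : EReal)

/-- `log E_P[exp X]` for real-valued `X`, valued in `EReal`. -/
def logMGF (P : Measure Ω) (X : Ω → ℝ) : EReal :=
  ENNReal.log (∫⁻ ω, ENNReal.ofReal (Real.exp (X ω)) ∂P)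

/-- `log E_P[exp X]` for `EReal`-valued `X`. -/
def logMGFE (P : Measure Ω) (X : Ω → EReal) : EReal :=
  ENNReal.log (∫⁻ ω, EReal.exp (X ω) ∂P)

/-- A set is `Pfam`-polar if it is null under every `P ∈ Pfam`. -/
def Polar (Pfam : Set (Measure Ω)) (N : Set Ω) : Prop := ∀ P ∈ Pfam, P N = 0

/-- No-arbitrage `NA(Pfam)` for a one-period market with increment `ΔS`. -/
def NA {d : ℕ} (Pfam : Set (Measure Ω)) (ΔS : Ω → Fin d → ℝ) : Prop :=
  ∀ h : Fin d → ℝ, Polar Pfam {ω : Ω | ∑ i, h i * ΔS ω i < 0} →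
    Polar Pfam {ω : Ω | ∑ i, h i * ΔS ω i ≠ 0}

/-- Convexity of a family of measures. -/
def ConvexFamily (Pfam : Set (Measure Ω)) : Prop :=
  ∀ P₁ ∈ Pfam, ∀ P₂ ∈ Pfam, ∀ t : ℝ≥0, t ≤ 1 →
    ((t : ℝ≥0∞) • P₁ + ((1 - t : ℝ≥0) : ℝ≥0∞) • P₂) ∈ Pfam

/-!
Every `P ∈ 𝒫` is carried by `[0,1]`, so holding one unit of the asset never loses 𝒫-q.s. but
gains under `δ₁`: NA(𝒫) fails. Finite robust entropy forces `Q ≪ P` for some `P ∈ 𝒫`, so a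
martingale measure is carried by `[0,∞)` and has mean zero, i.e. `Q = δ₀`; the dual value is
`X(0) − H(δ₀,𝒫) = −1`. On the primal side `h = 0` gives at most `0` because `X ≤ 0`, while for
every `h` the measures `δ_x`, `x ↓ 0`, never see the point where `X` is charged and give values
`h x → 0`; so the primal value is `0`.
-/

open Set Topology

/-- `conv{δ_x : x ∈ K}`. -/
def diracMixtures (K : Set Ω) : Set (Measure Ω) :=
  {P | ∃ (s : Finset Ω) (a : Ω → ℝ≥0), (↑s : Set Ω) ⊆ K ∧ (∑ x ∈ s, a x) = 1 ∧
    P = ∑ x ∈ s, ((a x : ℝ≥0∞) • Measure.dirac x)}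

theorem dirac_mem_diracMixtures {K : Set Ω} {x : Ω} (hx : x ∈ K) :
    Measure.dirac x ∈ diracMixtures K :=
  ⟨{x}, fun _ => 1, by simpa using hx, by simp, by simp⟩

theorem isProbabilityMeasure_of_mem_diracMixtures {K : Set Ω} {P : Measure Ω}
    (hP : P ∈ diracMixtures K) : IsProbabilityMeasure P := by
  obtain ⟨s, a, -, ha, rfl⟩ := hP
  constructor
  simp [Measure.finsetSum_apply, ← ENNReal.ofNNReal_finsetSum, ha]

theorem polar_diracMixtures_of_disjoint [MeasurableSingletonClass Ω] {K A : Set Ω}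
    (hA : Disjoint A K) : Polar (diracMixtures K) A := by
  rintro P ⟨s, a, hs, -, rfl⟩
  rw [Measure.finsetSum_apply]
  refine Finset.sum_eq_zero fun x hx => ?_
  rw [Measure.smul_apply, Measure.dirac_apply,
    indicator_of_notMem (hA.notMem_of_mem_right (hs hx)), smul_zero]

theorem relEntropy_self (Q : Measure Ω) [IsProbabilityMeasure Q] : relEntropy Q Q = 0 := by
  rw [relEntropy, if_pos Measure.AbsolutelyContinuous.rfl]
  have hlog : (fun ω => ENNReal.ofReal ((Q.rnDeriv Q ω).toReal * log (Q.rnDeriv Q ω).toReal + 1))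
      =ᵐ[Q] 1 := by
    filter_upwards [Measure.rnDeriv_self Q] with ω hω
    simp [hω]
  simp [lintegral_congr_ae hlog]

theorem robustEntropy_eq_zero_of_mem {Q : Measure Ω} [IsProbabilityMeasure Q]
    {Pfam : Set (Measure Ω)} (hQ : Q ∈ Pfam) : robustEntropy Q Pfam = 0 :=
  nonpos_iff_eq_zero.1 <| (iInf₂_le Q hQ).trans_eq (relEntropy_self Q)

theorem exists_absolutelyContinuous_of_robustEntropy_ne_top {Q : Measure Ω}
    {Pfam : Set (Measure Ω)} (h : robustEntropy Q Pfam ≠ ⊤) : ∃ P ∈ Pfam, Q ≪ P := by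
  by_contra! hac
  refine h (iInf₂_eq_top.2 fun P hP => ?_)
  rw [relEntropy, if_neg (hac P hP)]

theorem eq_dirac_of_ae_eq {Q : Measure Ω} [IsProbabilityMeasure Q] {a : Ω}
    (h : ∀ᵐ ω ∂Q, ω = a) : Q = Measure.dirac a :=
  calc Q = Q.map id := Measure.map_id.symm
    _ = Q.map (fun _ => a) := Measure.map_congr h
    _ = Measure.dirac a := by rw [Measure.map_const, measure_univ, one_smul]

theorem eq_dirac_zero_of_integral_eq_zero {Q : Measure ℝ} [IsProbabilityMeasure Q]
    (hneg : Q (Iio 0) = 0) (hint : Integrable id Q) (hmean : ∫ ω, ω ∂Q = 0) :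
    Q = Measure.dirac 0 := by
  have hnonneg : 0 ≤ᵐ[Q] id := by
    rw [EventuallyLE, ae_iff]
    simpa only [Pi.zero_apply, id_eq, not_le, Iio_def] using hneg
  exact eq_dirac_of_ae_eq ((integral_eq_zero_iff_of_nonneg_ae hnonneg hint).1 hmean)

/-- The set `ℳ` of the dual problem, for `ΔS = id`. -/
def finiteEntropyMartingaleMeasures (Pfam : Set (Measure ℝ)) : Set (Measure ℝ) :=
  {Q | IsProbabilityMeasure Q ∧ Integrable (fun ω : ℝ => ω) Q ∧ (∫ ω, ω ∂Q) = 0 ∧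
    robustEntropy Q Pfam ≠ ⊤}

theorem finiteEntropyMartingaleMeasures_diracMixtures {K : Set ℝ} (hK : K ⊆ Ici 0)
    (h0 : 0 ∈ K) : finiteEntropyMartingaleMeasures (diracMixtures K) = {Measure.dirac 0} := by
  ext Q
  constructor
  · rintro ⟨hQ, hint, hmean, hent⟩
    obtain ⟨P, hP, hQP⟩ := exists_absolutelyContinuous_of_robustEntropy_ne_top hent
    have hneg : Q (Iio 0) = 0 :=
      hQP <| polar_diracMixtures_of_disjoint
        (disjoint_of_subset_right hK (Iio_disjoint_Ici le_rfl)) P hP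
    exact eq_dirac_zero_of_integral_eq_zero hneg hint hmean
  · rintro rfl
    refine ⟨inferInstance, integrable_dirac (by simp), by simp, ?_⟩
    simp [robustEntropy_eq_zero_of_mem (dirac_mem_diracMixtures h0)]

theorem not_NA_diracMixtures {K : Set ℝ} (hK : K ⊆ Ici 0) {x : ℝ} (hx : x ∈ K) (hx0 : x ≠ 0) :
    ¬ NA (diracMixtures K) (fun ω (_ : Fin 1) => ω) := by
  intro hNA
  have hlong := hNA (fun _ => 1) ?_ _ (dirac_mem_diracMixtures hx)
  · simp [hx0] at hlong
  · refine polar_diracMixtures_of_disjoint (disjoint_left.2 fun ω hω hωK => ?_)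
    simp only [Fin.sum_univ_one, one_mul, mem_ofPred_eq] at hω
    exact (hK hωK).not_gt hω

theorem logMGF_dirac [MeasurableSingletonClass Ω] (x : Ω) (f : Ω → ℝ) :
    logMGF (Measure.dirac x) f = f x := by
  rw [logMGF, lintegral_dirac, ENNReal.log_ofReal_of_pos (exp_pos _), log_exp]

theorem logMGF_nonpos {P : Measure Ω} [IsProbabilityMeasure P] {f : Ω → ℝ}
    (hf : ∀ ω, f ω ≤ 0) : logMGF P f ≤ 0 := by
  have hexp : ∫⁻ ω, ENNReal.ofReal (exp (f ω)) ∂P ≤ 1 :=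
    calc ∫⁻ ω, ENNReal.ofReal (exp (f ω)) ∂P ≤ ∫⁻ _, 1 ∂P :=
          lintegral_mono fun ω => ENNReal.ofReal_le_one.2 (exp_le_one_iff.2 (hf ω))
      _ = 1 := by simp
  calc logMGF P f ≤ ENNReal.log 1 := ENNReal.log_monotone hexp
    _ = 0 := ENNReal.log_one

theorem le_iSup_logMGF_diracMixtures [MeasurableSingletonClass Ω] {K : Set Ω} {x : Ω}
    (hx : x ∈ K) (f : Ω → ℝ) : (f x : EReal) ≤ ⨆ P ∈ diracMixtures K, logMGF P f :=
  logMGF_dirac x f ▸ le_iSup₂ (f := fun P _ => logMGF P f) _ (dirac_mem_diracMixtures hx)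

theorem zero_le_iSup_logMGF_diracMixtures_Icc {f : ℝ → ℝ} (hf : Tendsto f (𝓝[>] 0) (𝓝 0)) :
    0 ≤ ⨆ P ∈ diracMixtures (Icc (0 : ℝ) 1), logMGF P f := by
  have hlim : Tendsto (fun x => (f x : EReal)) (𝓝[>] 0) (𝓝 ((0 : ℝ) : EReal)) :=
    (continuous_coe_real_ereal.tendsto 0).comp hf
  rw [← EReal.coe_zero]
  refine le_of_tendsto hlim ?_
  filter_upwards [Ioo_mem_nhdsGT one_pos] with x hx
  exact le_iSup_logMGF_diracMixtures (Ioo_subset_Icc_self hx) f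

theorem iInf_iSup_logMGF_diracMixtures_Icc_eq_zero :
    (⨅ h : Fin 1 → ℝ, ⨆ P ∈ diracMixtures (Icc (0 : ℝ) 1),
      logMGF P (fun ω => (if ω = 0 then (-1 : ℝ) else 0) + h 0 * ω)) = 0 := by
  refine le_antisymm ((iInf_le _ 0).trans (iSup₂_le fun P hP => ?_)) (le_iInf fun h => ?_)
  · have := isProbabilityMeasure_of_mem_diracMixtures hP
    refine logMGF_nonpos fun ω => ?_
    split_ifs <;> simp
  · refine zero_le_iSup_logMGF_diracMixtures_Icc ?_
    have hlin : Tendsto (fun ω : ℝ => h 0 * ω) (𝓝[>] 0) (𝓝 0) := by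
      simpa using ((continuous_const_mul (h 0)).tendsto 0).mono_left nhdsWithin_le_nhds
    refine hlin.congr' ?_
    filter_upwards [self_mem_nhdsWithin] with ω (hω : 0 < ω)
    simp [hω.ne']

theorem eInt_dirac [MeasurableSingletonClass Ω] (x : Ω) (X : Ω → ℝ) :
    eInt (Measure.dirac x) X = X x := by
  rw [eInt, lintegral_dirac, lintegral_dirac, if_neg ENNReal.ofReal_ne_top,
    EReal.coe_ennreal_ofReal, EReal.coe_ennreal_ofReal]
  rcases le_total 0 (X x) with h | h
  · simp [h]
  · simp [h]

theorem iSup_eInt_sub_robustEntropy_diracMixtures {K : Set ℝ} (hK : K ⊆ Ici 0) (h0 : 0 ∈ K)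
    (X : ℝ → ℝ) : (⨆ Q ∈ finiteEntropyMartingaleMeasures (diracMixtures K),
      (eInt Q X - (robustEntropy Q (diracMixtures K) : EReal))) = X 0 := by
  rw [finiteEntropyMartingaleMeasures_diracMixtures hK h0, iSup_singleton, eInt_dirac,
    robustEntropy_eq_zero_of_mem (dirac_mem_diracMixtures h0)]
  simp

/-- Failure of duality without no-arbitrage: with `Ω = ℝ`, `ΔS(ω) = ω`,
`𝒫 = conv{δ_x : x ∈ [0,1]}` and `X = −1_{{0}}`, the condition `NA(𝒫)` fails, the primal
value is `0`, the set of martingale measures with finite robust entropy is `{δ₀}`, and the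
dual value is `−1`; hence there is a strictly positive duality gap. -/
theorem duality_gap_without_no_arbitrage :
    letI Pfam : Set (Measure ℝ) := {P | ∃ (s : Finset ℝ) (a : ℝ → ℝ≥0),
        (↑s : Set ℝ) ⊆ Set.Icc (0 : ℝ) 1 ∧ (∑ x ∈ s, a x) = 1 ∧
        P = ∑ x ∈ s, ((a x : ℝ≥0∞) • Measure.dirac x)}
    letI X : ℝ → ℝ := fun ω => if ω = 0 then (-1 : ℝ) else 0
    letI ΔS : ℝ → Fin 1 → ℝ := fun ω _ => ω
    letI Mset : Set (Measure ℝ) := {Q | IsProbabilityMeasure Q ∧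
        Integrable (fun ω : ℝ => ω) Q ∧ (∫ ω, ω ∂Q) = 0 ∧ robustEntropy Q Pfam ≠ ⊤}
    ¬ NA Pfam ΔS ∧
    (⨅ h : Fin 1 → ℝ, ⨆ P ∈ Pfam, logMGF P (fun ω => X ω + h 0 * ω)) = (0 : EReal) ∧
    Mset = {Measure.dirac 0} ∧
    (⨆ Q ∈ Mset, (eInt Q X - (robustEntropy Q Pfam : EReal))) = ((-1 : ℝ) : EReal) := by
  have hK : Icc (0 : ℝ) 1 ⊆ Ici 0 := Icc_subset_Ici_self
  have h0 : (0 : ℝ) ∈ Icc 0 1 := left_mem_Icc.2 zero_le_one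
  refine ⟨not_NA_diracMixtures hK (right_mem_Icc.2 zero_le_one) one_ne_zero,
    iInf_iSup_logMGF_diracMixtures_Icc_eq_zero,
    finiteEntropyMartingaleMeasures_diracMixtures hK h0,
    (iSup_eInt_sub_robustEntropy_diracMixtures hK h0 _).trans ?_⟩
  simp

end
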